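/- arXiv:2402.03617 — 3 statements merged into one kernel-verified Lean document; each statement's English description precedes it below -/
import Mathlib

section
/- Let l ≥ 1, θ₁,…,θ_l ∈ ℝ and p₁,…,p_l ∈ ℝ², and g_k = (R(θ_k), p_k). For all 1 ≤ i < j ≤ l, the translation components of the cyclic products satisfy Δ^i = R_{i,j−1} Δ^j + (I − R_{1,l}) p_{i,j−1}, where (R_{i,j−1}, p_{i,j−1}) denotes the partial product g_i g_{i+1} ⋯ g_{j−1}, I is the 2×2 identity matrix, and R_{1,l} = R(θ₁+⋯+θ_l). -/
/-- The 2×2 rotation matrix `R(θ)`. -/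
noncomputable def Rot (θ : ℝ) : Matrix (Fin 2) (Fin 2) ℝ :=
  !![Real.cos θ, -Real.sin θ; Real.sin θ, Real.cos θ]

/-- An element of `SE(2)`: a pair of a 2×2 matrix (rotation part) and a translation in ℝ². -/
abbrev SE2 : Type := Matrix (Fin 2) (Fin 2) ℝ × (Fin 2 → ℝ)

/-- Group law on `SE(2)`: `(R₁, p₁)·(R₂, p₂) = (R₁R₂, p₁ + R₁p₂)`. -/
noncomputable def se2Mul (g h : SE2) : SE2 := (g.1 * h.1, g.2 + g.1.mulVec h.2)

/-- Identity element of `SE(2)`. -/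
noncomputable def se2One : SE2 := ((1 : Matrix (Fin 2) (Fin 2) ℝ), (0 : Fin 2 → ℝ))

/-- Given angles `θ` and translations `p` (1-indexed), `gSE2 θ p k = (R(θ k), p k)`. -/
noncomputable def gSE2 (θ : ℕ → ℝ) (p : ℕ → Fin 2 → ℝ) (k : ℕ) : SE2 := (Rot (θ k), p k)

/-- Partial product `g_{i,j} = g_i g_{i+1} ⋯ g_j` (the identity when `j < i`). -/
noncomputable def partialProd (θ : ℕ → ℝ) (p : ℕ → Fin 2 → ℝ) (i j : ℕ) : SE2 :=
  ((List.range (j + 1 - i)).map (fun t => gSE2 θ p (i + t))).foldr se2Mul se2One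

/-- Cyclic product `g^i = g_i g_{i+1} ⋯ g_l g_1 ⋯ g_{i-1}`. -/
noncomputable def cycProd (θ : ℕ → ℝ) (p : ℕ → Fin 2 → ℝ) (l i : ℕ) : SE2 :=
  se2Mul (partialProd θ p i l) (partialProd θ p 1 (i - 1))

/-!
Both `g_{i,j-1} g^j` and `g^i g_{i,j-1}` equal `g_i ⋯ g_l g_1 ⋯ g_{j-1}`, so `g_{i,j-1}` conjugates
`g^j` into `g^i`. Comparing translation parts of this identity gives the relation, once one knows
that the rotation part of every cyclic product is `R_{1,l}`, which holds because plane rotations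
commute.
-/

open Matrix

lemma se2Mul_assoc (a b c : SE2) : se2Mul (se2Mul a b) c = se2Mul a (se2Mul b c) := by
  simp only [se2Mul, Matrix.mul_assoc, mulVec_add, mulVec_mulVec, add_assoc]

lemma one_se2Mul (a : SE2) : se2Mul se2One a = a := by
  simp [se2Mul, se2One]

lemma foldr_se2Mul (L : List SE2) (x : SE2) :
    L.foldr se2Mul x = se2Mul (L.foldr se2Mul se2One) x := by
  induction L with
  | nil => exact (one_se2Mul x).symm
  | cons a L ih => rw [List.foldr_cons, List.foldr_cons, ih, se2Mul_assoc]

lemma Rot_add (a b : ℝ) : Rot (a + b) = Rot a * Rot b := by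
  ext r c
  fin_cases r <;> fin_cases c <;>
    simp [Rot, mul_apply, Fin.sum_univ_two, Real.cos_add, Real.sin_add] <;> ring

lemma Rot_zero : Rot 0 = 1 := by
  ext r c
  fin_cases r <;> fin_cases c <;> simp [Rot, one_apply]

lemma Rot_mul_comm (a b : ℝ) : Rot a * Rot b = Rot b * Rot a := by
  rw [← Rot_add, ← Rot_add, add_comm]

section partialProd

variable (θ : ℕ → ℝ) (p : ℕ → Fin 2 → ℝ)

lemma partialProd_of_lt {i j : ℕ} (h : j < i) : partialProd θ p i j = se2One := by
  simp [partialProd, show j + 1 - i = 0 by omega]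

lemma partialProd_self (i : ℕ) : partialProd θ p i i = gSE2 θ p i := by
  simp [partialProd, se2Mul, se2One, gSE2]

lemma partialProd_split {i m k : ℕ} (hi : i ≤ m + 1) (hk : m ≤ k) :
    partialProd θ p i k = se2Mul (partialProd θ p i m) (partialProd θ p (m + 1) k) := by
  have hlen : k + 1 - i = (m + 1 - i) + (k + 1 - (m + 1)) := by omega
  have hshift : (fun t => gSE2 θ p (i + t)) ∘ (m + 1 - i + ·) = fun t => gSE2 θ p (m + 1 + t) := by
    funext t
    simp only [Function.comp_apply]
    congr 1
    omega
  rw [partialProd, hlen, List.range_add, List.map_append, List.map_map, hshift,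
    List.foldr_append, foldr_se2Mul]
  rfl

lemma partialProd_fst (i j : ℕ) : (partialProd θ p i j).1 = Rot (∑ k ∈ Finset.Icc i j, θ k) := by
  induction j with
  | zero =>
    rcases Nat.eq_zero_or_pos i with rfl | hi
    · simp [partialProd_self, gSE2]
    · simp [partialProd_of_lt θ p hi, Finset.Icc_eq_empty_of_lt hi, se2One, Rot_zero]
  | succ j ih =>
    by_cases hij : i ≤ j + 1
    · rw [partialProd_split θ p hij j.le_succ, partialProd_self, Finset.sum_Icc_succ_top hij,
        Rot_add]
      simp only [se2Mul, gSE2, ih]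
    · replace hij := not_le.mp hij
      simp [partialProd_of_lt θ p hij, Finset.Icc_eq_empty_of_lt hij, se2One, Rot_zero]

lemma cycProd_fst (l : ℕ) {i : ℕ} (hi : 1 ≤ i) (hil : i ≤ l + 1) :
    (cycProd θ p l i).1 = Rot (∑ k ∈ Finset.Icc 1 l, θ k) := by
  have hsplit := partialProd_split θ p (i := 1) (m := i - 1) (k := l) (by omega) (by omega)
  rw [Nat.sub_add_cancel hi] at hsplit
  rw [← partialProd_fst θ p, hsplit, cycProd]
  simp only [se2Mul, partialProd_fst]
  exact Rot_mul_comm _ _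

lemma cycProd_conj (l : ℕ) {i j : ℕ} (hi : 1 ≤ i) (hij : i ≤ j) (hj : j ≤ l + 1) :
    se2Mul (partialProd θ p i (j - 1)) (cycProd θ p l j) =
      se2Mul (cycProd θ p l i) (partialProd θ p i (j - 1)) := by
  have hhead := partialProd_split θ p (i := 1) (m := i - 1) (k := j - 1) (by omega) (by omega)
  have htail := partialProd_split θ p (i := i) (m := j - 1) (k := l) (by omega) (by omega)
  rw [Nat.sub_add_cancel hi] at hhead
  rw [Nat.sub_add_cancel (by omega)] at htail
  simp only [cycProd, hhead, htail, se2Mul_assoc]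

end partialProd

lemma snd_eq_of_se2Mul_eq {P g h : SE2} (hconj : se2Mul P g = se2Mul h P) :
    h.2 = P.1 *ᵥ g.2 + (1 - h.1) *ᵥ P.2 := by
  have hsnd := congrArg Prod.snd hconj
  simp only [se2Mul] at hsnd
  rw [sub_mulVec, one_mulVec]
  linear_combination -hsnd

theorem cycProd_translation_relation_general (l : ℕ) (θ : ℕ → ℝ) (p : ℕ → Fin 2 → ℝ)
    (i j : ℕ) (hi : 1 ≤ i) (hij : i < j) (hj : j ≤ l) :
    (cycProd θ p l i).2 =
      (partialProd θ p i (j - 1)).1.mulVec (cycProd θ p l j).2 +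
        ((1 : Matrix (Fin 2) (Fin 2) ℝ) - Rot (∑ k ∈ Finset.Icc 1 l, θ k)).mulVec
          (partialProd θ p i (j - 1)).2 := by
  rw [← cycProd_fst θ p l hi (by omega)]
  exact snd_eq_of_se2Mul_eq (cycProd_conj θ p l hi hij.le (by omega))

/-- for `1 ≤ i < j ≤ l`, the translation components of the cyclic products
satisfy `Δ^i = R_{i,j−1} Δ^j + (I − R_{1,l}) p_{i,j−1}`. -/
theorem cycProd_translation_relation (l : ℕ) (hl : 1 ≤ l) (θ : ℕ → ℝ) (p : ℕ → Fin 2 → ℝ)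
    (i j : ℕ) (hi : 1 ≤ i) (hij : i < j) (hj : j ≤ l) :
    (cycProd θ p l i).2 =
      (partialProd θ p i (j - 1)).1.mulVec (cycProd θ p l j).2 +
        ((1 : Matrix (Fin 2) (Fin 2) ℝ) - Rot (∑ k ∈ Finset.Icc 1 l, θ k)).mulVec
          (partialProd θ p i (j - 1)).2 :=
  cycProd_translation_relation_general l θ p i j hi hij hj
end

section
/- For every n ≥ 2 and every permutation σ of Fin n, the list L(σ) has length n(n−1), and its cyclic edge sequence contains every ordered pair (u, v) of distinct elements of Fin n exactly once; that is, L(σ) is the vertex list of an Eulerian circuit of the complete digraph on n vertices. -/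
/-- The vertex list produced by the stochastic Hierholzer construction: for
`i = n−1, n−2, …, 1` (in decreasing order), concatenate the blocks
`[σ(0), σ(i), σ(1), σ(i), …, σ(i−1), σ(i)]`. -/
def hierList (n : ℕ) (hn : 2 ≤ n) (σ : Equiv.Perm (Fin n)) : List (Fin n) :=
  ((List.range (n - 1)).reverse).flatMap fun i =>
    (List.range (i + 1)).flatMap fun j =>
      [σ ⟨j % n, Nat.mod_lt _ (by omega)⟩, σ ⟨(i + 1) % n, Nat.mod_lt _ (by omega)⟩]

/-- The cyclic edge sequence of a list `[a₀, …, a_{N−1}]`: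
`(a₀,a₁), (a₁,a₂), …, (a_{N−1},a₀)`. -/
def cyclicEdges {α : Type*} (L : List α) : List (α × α) := L.zip (L.rotate 1)

/-!
The block of `i` is `[σ 0, σ i, σ 1, σ i, …, σ (i-1), σ i]`; rotated by one step it becomes the
concatenation of the closed walks `[σ i, σ j]`, so its cyclic edges are the pairs `(σ i, σ j)`
and `(σ j, σ i)` for `j < i`. All blocks start at `σ 0`, and the cyclic edges of a concatenation
of closed walks at a common base point are the concatenation of their cyclic edges. Hence the
cyclic edges of `L(σ)` are, up to order, the off-diagonal pairs `List.offDiag` of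
`[σ 0, …, σ (n-1)]`, which contain each pair of distinct vertices exactly once.
-/

open List

section CyclicEdges

variable {α β : Type*}

theorem length_cyclicEdges (L : List α) : (cyclicEdges L).length = L.length := by
  simp [cyclicEdges]

theorem cyclicEdges_cons (a : α) (t : List α) :
    cyclicEdges (a :: t) = zip (a :: t) (t ++ [a]) := by
  simp [cyclicEdges]

theorem cyclicEdges_rotate (L : List α) (k : ℕ) :
    cyclicEdges (L.rotate k) = (cyclicEdges L).rotate k := by
  rw [cyclicEdges, cyclicEdges, rotate_rotate, Nat.add_comm, ← rotate_rotate, zip,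
    zipWith_rotate_distrib _ _ _ _ (length_rotate ..).symm, ← zip]

theorem cyclicEdges_cons_append_cons (a : α) (s t : List α) :
    cyclicEdges (a :: s ++ a :: t) = cyclicEdges (a :: s) ++ cyclicEdges (a :: t) := by
  rw [cons_append, cyclicEdges_cons, cyclicEdges_cons, cyclicEdges_cons, ← zip_append (by simp)]
  simp

theorem cyclicEdges_flatMap (a : α) (F : β → List α) :
    ∀ l : List β, (∀ b ∈ l, (F b).head? = some a) →
      cyclicEdges (l.flatMap F) = l.flatMap fun b => cyclicEdges (F b)
  | [], _ => rfl
  | [b], _ => by simp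
  | b :: c :: l, hF => by
    obtain ⟨s, hs⟩ := head?_eq_some_iff.mp (hF b (by simp))
    obtain ⟨t, ht⟩ := head?_eq_some_iff.mp (hF c (by simp))
    have ih := cyclicEdges_flatMap a F (c :: l) fun b hb => hF b (mem_cons_of_mem _ hb)
    calc cyclicEdges ((b :: c :: l).flatMap F)
        = cyclicEdges (a :: s ++ a :: (t ++ l.flatMap F)) := by simp [hs, ht]
      _ = cyclicEdges (F b) ++ cyclicEdges ((c :: l).flatMap F) := by
        rw [cyclicEdges_cons_append_cons, hs, flatMap_cons, ht, cons_append]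
      _ = (b :: c :: l).flatMap fun b => cyclicEdges (F b) := by
        simp only [flatMap_cons] at ih ⊢
        rw [ih]

theorem cons_flatMap_pair (h : β → α) (a : α) (l : List β) :
    a :: l.flatMap (fun j => [h j, a]) = l.flatMap (fun j => [a, h j]) ++ [a] := by
  induction l with
  | nil => rfl
  | cons x l ih => simp [ih]

theorem rotate_one_flatMap_pair (h : β → α) (a : α) (l : List β) :
    (l.flatMap fun j => [h j, a]).rotate 1 = (l.rotate 1).flatMap fun j => [a, h j] := by
  cases l with
  | nil => rfl
  | cons x l => simp [rotate_cons_succ, cons_flatMap_pair]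

theorem cyclicEdges_flatMap_pair_perm (h : β → α) (a : α) (l : List β) :
    cyclicEdges (l.flatMap fun j => [h j, a]) ~ (l.map h).map (a, ·) ++ (l.map h).map (·, a) := by
  calc cyclicEdges (l.flatMap fun j => [h j, a])
      ~ (cyclicEdges (l.flatMap fun j => [h j, a])).rotate 1 := (rotate_perm _ _).symm
    _ = (l.rotate 1).flatMap fun j => cyclicEdges [a, h j] := by
      rw [← cyclicEdges_rotate, rotate_one_flatMap_pair, cyclicEdges_flatMap a _ _ (by simp)]
    _ ~ l.flatMap fun j => [(a, h j)] ++ [(h j, a)] := (rotate_perm l 1).flatMap_right _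
    _ ~ (l.map h).map (a, ·) ++ (l.map h).map (·, a) := by
      rw [map_map, map_map]
      simp only [Function.comp_def, map_eq_flatMap]
      exact (flatMap_append_perm l (fun j => [(a, h j)]) fun j => [(h j, a)]).symm

end CyclicEdges

section HierholzerWalk

variable {α : Type*} (g : ℕ → α)

def hierBlock (p : ℕ) : List α := (range p).flatMap fun j => [g j, g p]

def hierWalk (m : ℕ) : List α := (range m).reverse.flatMap fun i => hierBlock g (i + 1)

theorem head?_hierBlock_succ (p : ℕ) : (hierBlock g (p + 1)).head? = some (g 0) := by
  simp [hierBlock, range_succ_eq_map]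

theorem cyclicEdges_hierWalk (m : ℕ) :
    cyclicEdges (hierWalk g m) =
      (range m).reverse.flatMap fun i => cyclicEdges (hierBlock g (i + 1)) :=
  cyclicEdges_flatMap (g 0) _ _ fun i _ => head?_hierBlock_succ g i

theorem cyclicEdges_hierWalk_perm (m : ℕ) :
    cyclicEdges (hierWalk g m) ~ ((range (m + 1)).map g).offDiag := by
  induction m with
  | zero => simp [hierWalk, cyclicEdges]
  | succ m ih =>
    set V := (range (m + 1)).map g
    rw [cyclicEdges_hierWalk] at ih ⊢
    rw [range_succ, reverse_append, reverse_singleton, singleton_append, flatMap_cons]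
    calc _ ~ (V.map (g (m + 1), ·) ++ V.map (·, g (m + 1))) ++ V.offDiag :=
          (cyclicEdges_flatMap_pair_perm g _ _).append ih
      _ ~ (g (m + 1) :: V).offDiag := (offDiag_cons_perm _ _).symm
      _ ~ ((range (m + 1 + 1)).map g).offDiag := by
        rw [range_succ (n := m + 1), map_append]
        exact (perm_append_singleton _ _).symm.offDiag

end HierholzerWalk

/-- `L(σ)` has length `n(n−1)` and its cyclic edge sequence contains every
ordered pair of distinct vertices exactly once, i.e. it is the vertex list of an
Eulerian circuit of the complete digraph on `n` vertices. -/
theorem hierList_eulerian (n : ℕ) (hn : 2 ≤ n) (σ : Equiv.Perm (Fin n)) :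
    (hierList n hn σ).length = n * (n - 1) ∧
    (∀ u v : Fin n, u ≠ v → (cyclicEdges (hierList n hn σ)).count (u, v) = 1) := by
  set g : ℕ → Fin n := fun k => σ ⟨k % n, Nat.mod_lt _ (by omega)⟩
  have hwalk : hierList n hn σ = hierWalk g (n - 1) := rfl
  have hvertices : (range (n - 1 + 1)).map g = (finRange n).map σ := by
    rw [Nat.sub_add_cancel (by omega : 1 ≤ n)]
    refine ext_getElem (by simp) fun i hi _ => ?_
    simp [g, Nat.mod_eq_of_lt (by simpa using hi : i < n)]
  have hperm : cyclicEdges (hierList n hn σ) ~ ((finRange n).map σ).offDiag := by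
    rw [hwalk, ← hvertices]
    exact cyclicEdges_hierWalk_perm g (n - 1)
  have hcount (u : Fin n) : ((finRange n).map σ).count u = 1 :=
    count_eq_one_of_mem ((nodup_finRange n).map σ.injective) (by simpa using σ.surjective u)
  refine ⟨?_, fun u v huv => ?_⟩
  · rw [← length_cyclicEdges, hperm.length_eq, length_offDiag', length_map, length_finRange]
  · rw [hperm.count_eq, count_offDiag_eq_mul_sub_ite, hcount, hcount, if_neg huv]
end

section
/- For every n ≥ 2, the map σ ↦ L(σ) is injective on permutations of Fin n: if σ ≠ τ then L(σ) ≠ L(τ). Consequently the construction produces n! pairwise distinct Eulerian circuit vertex lists for the complete digraph on n vertices. -/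
lemma aux_len {α : Type*} (f : ℕ → α) (c : α) (m : ℕ) :
    ((List.range m).flatMap fun j => [f j, c]).length = 2 * m := by
  induction m with
  | zero => simp
  | succ m ih => rw [List.range_succ, List.flatMap_append]; simp [ih]; omega

lemma aux_get {α : Type*} : ∀ (m k : ℕ), k < m → ∀ (f : ℕ → α) (c d : α),
    (((List.range m).flatMap fun j => [f j, c]).getD (2 * k) d) = f k := by
  intro m
  induction m with
  | zero => omega
  | succ m ih =>
    intro k hk f c d
    rw [List.range_succ_eq_map, List.flatMap_cons, List.flatMap_map]
    cases k with
    | zero => simp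
    | succ k =>
      have : 2 * (k + 1) = ((2 * k) + 1) + 1 := by ring
      rw [this]
      simp only [List.cons_append, List.getD_cons_succ, List.nil_append]
      exact ih k (by omega) (fun j => f (j + 1)) c d

lemma aux_get1 {α : Type*} (m : ℕ) (hm : 1 ≤ m) (f : ℕ → α) (c d : α) :
    (((List.range m).flatMap fun j => [f j, c]).getD 1 d) = c := by
  obtain ⟨m, rfl⟩ : ∃ m', m = m' + 1 := ⟨m - 1, by omega⟩
  rw [List.range_succ_eq_map, List.flatMap_cons]
  simp

lemma hierList_getD (n : ℕ) (hn : 2 ≤ n) (σ : Equiv.Perm (Fin n)) (idx : ℕ)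
    (h : idx < 2 * (n - 1)) (d : Fin n) :
    (hierList n hn σ).getD idx d =
      (((List.range (n - 1)).flatMap fun j =>
        [σ ⟨j % n, Nat.mod_lt _ (by omega)⟩,
         σ ⟨(n - 1) % n, Nat.mod_lt _ (by omega)⟩]).getD idx d) := by
  unfold hierList
  obtain ⟨m, hm⟩ : ∃ m, n - 1 = m + 1 := ⟨n - 2, by omega⟩
  simp only [hm]
  conv_lhs => rw [List.range_succ, List.reverse_append, List.reverse_singleton,
    List.singleton_append, List.flatMap_cons]
  rw [List.getD_append]
  rw [aux_len (fun j => σ ⟨j % n, Nat.mod_lt _ (by omega)⟩)]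
  omega

lemma recover (n : ℕ) (hn : 2 ≤ n) (σ : Equiv.Perm (Fin n)) (k : ℕ) (hk : k < n) (d : Fin n) :
    σ ⟨k, hk⟩ = (hierList n hn σ).getD (if k = n - 1 then 1 else 2 * k) d := by
  split_ifs with h
  · rw [hierList_getD n hn σ 1 (by omega) d,
      aux_get1 (n - 1) (by omega) (fun j => σ ⟨j % n, Nat.mod_lt _ (by omega)⟩)
        (σ ⟨(n - 1) % n, Nat.mod_lt _ (by omega)⟩) d]
    congr 1
    ext
    simp [h, Nat.mod_eq_of_lt (by omega : n - 1 < n)]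
  · have hk' : k < n - 1 := by omega
    rw [hierList_getD n hn σ (2 * k) (by omega) d,
      aux_get (n - 1) k hk' (fun j => σ ⟨j % n, Nat.mod_lt _ (by omega)⟩)
        (σ ⟨(n - 1) % n, Nat.mod_lt _ (by omega)⟩) d]
    congr 1
    ext
    simp [Nat.mod_eq_of_lt hk]

/-- `σ ↦ L(σ)` is injective on permutations of `Fin n`, so the construction
produces `n!` pairwise distinct Eulerian circuit vertex lists. -/
theorem hierList_injective (n : ℕ) (hn : 2 ≤ n) :
    Function.Injective (hierList n hn) ∧
    (Finset.univ.image (hierList n hn)).card = Nat.factorial n := by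
  have hinj : Function.Injective (hierList n hn) := by
    intro σ τ h
    ext x
    have h1 := recover n hn σ x.val x.isLt x
    have h2 := recover n hn τ x.val x.isLt x
    rw [h] at h1
    have : σ ⟨x.val, x.isLt⟩ = τ ⟨x.val, x.isLt⟩ := h1.trans h2.symm
    simpa using congrArg Fin.val this
  refine ⟨hinj, ?_⟩
  rw [Finset.card_image_of_injective _ hinj, Finset.card_univ, Fintype.card_perm,
    Fintype.card_fin]
end
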